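/- arXiv:1012.2289 — 2 statements merged into one kernel-verified Lean document; each statement's English description precedes it below -/
import Mathlib

section
/- There is a constant c > 0 such that for all n ≥ 2 and ε ∈ (0,1), the cube [−1+ε, 1−ε]^n can be covered by at most 2^{c n log n} · (1 + log(1/ε))^n ellipsoids, each of which is contained in [−1,1]^n. -/
/-!
Cover `[-1+ε, 1-ε]` by short intervals `[c - r/n, c + r/n]` with `|c| + r ≤ 1`. A box that is a
product of such intervals lies in the axis-parallel ellipsoid with centre `(c_j)` and semi-axes
`(r_j)`, which in turn lies in the box `∏ [c_j - r_j, c_j + r_j] ⊆ [-1,1]^n`; so a family of `N`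
intervals yields `N^n` ellipsoids. The intervals are taken dyadically: the shell
`1 - 2^{-k} ≤ |u| < 1 - 2^{-k-1}` has width `2^{-k}/2` and is cut into `n` pieces of radius
`2^{-k}/(4n)`, with `r = 2^{-k}/4`. Only `k ≤ log(1/ε)` occurs, giving
`N = 2n (⌊log(1/ε)⌋ + 1)` and `N^n ≤ n^{2n} (1 + log(1/ε))^n`.
-/

open Real Finset Matrix

section AxisEllipsoid

variable {ι : Type*} [Fintype ι] [DecidableEq ι]

def axisEllipsoid (c r : ι → ℝ) : Set (ι → ℝ) :=
  (fun y => (diagonal r).mulVec y + c) '' {y | ∑ j, y j ^ 2 ≤ 1}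

lemma axisEllipsoid_subset_box {c r : ι → ℝ} (hr : ∀ j, 0 ≤ r j) :
    axisEllipsoid c r ⊆ {x | ∀ j, |x j - c j| ≤ r j} := by
  rintro x ⟨y, hy, rfl⟩ j
  have hyj : |y j| ≤ 1 := (sq_le_one_iff_abs_le_one _).mp <|
    (single_le_sum (f := fun j => y j ^ 2) (fun _ _ => sq_nonneg _) (mem_univ j)).trans hy
  simpa [mulVec_diagonal, abs_mul, abs_of_nonneg (hr j)] using
    mul_le_of_le_one_right (hr j) hyj

lemma card_mul_one_div_card_sq_le_one (N : ℕ) : (N : ℝ) * (1 / N) ^ 2 ≤ 1 := by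
  rcases N.eq_zero_or_pos with rfl | hN
  · simp
  · have hN' : (1 : ℝ) ≤ N := by exact_mod_cast hN
    rw [div_pow, one_pow, mul_one_div, sq, ← div_div, div_self (by positivity)]
    exact div_le_one_of_le₀ hN' (by positivity)

lemma box_subset_axisEllipsoid {c r : ι → ℝ} (hr : ∀ j, 0 < r j) :
    {x | ∀ j, |x j - c j| ≤ r j / Fintype.card ι} ⊆ axisEllipsoid c r := by
  intro x hx
  refine ⟨fun j => (x j - c j) / r j, ?_, ?_⟩
  · have hsq : ∀ j, ((x j - c j) / r j) ^ 2 ≤ (1 / Fintype.card ι) ^ 2 := fun j => by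
      have habs : |(x j - c j) / r j| ≤ 1 / Fintype.card ι := by
        rw [abs_div, abs_of_pos (hr j), div_le_iff₀ (hr j), one_div_mul_eq_div]
        exact hx j
      simpa only [sq_abs] using pow_le_pow_left₀ (abs_nonneg _) habs 2
    calc ∑ j, ((x j - c j) / r j) ^ 2 ≤ ∑ _j : ι, (1 / (Fintype.card ι : ℝ)) ^ 2 :=
          sum_le_sum fun j _ => hsq j
      _ = Fintype.card ι * (1 / (Fintype.card ι : ℝ)) ^ 2 := by simp
      _ ≤ 1 := card_mul_one_div_card_sq_le_one _
  · funext j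
    simp [mulVec_diagonal, mul_div_cancel₀ _ (hr j).ne']

end AxisEllipsoid

lemma exists_ellipsoid_cover_of_interval_cover {T : Type*} [Fintype T] (n : ℕ) {ε : ℝ}
    (ctr rad : T → ℝ) (hrad : ∀ t, 0 < rad t) (hinside : ∀ t, |ctr t| + rad t ≤ 1)
    (hcover : ∀ u, |u| ≤ 1 - ε → ∃ t, |u - ctr t| ≤ rad t / n) :
    ∃ (A : Fin (Fintype.card T ^ n) → Matrix (Fin n) (Fin n) ℝ)
      (b : Fin (Fintype.card T ^ n) → (Fin n → ℝ)),
      (∀ i, IsUnit (A i).det) ∧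
      (∀ i, (fun y => (A i).mulVec y + b i) '' {y : Fin n → ℝ | ∑ j, y j ^ 2 ≤ 1} ⊆
        {x : Fin n → ℝ | ∀ j, -1 ≤ x j ∧ x j ≤ 1}) ∧
      ({x : Fin n → ℝ | ∀ j, -1 + ε ≤ x j ∧ x j ≤ 1 - ε} ⊆
        ⋃ i, (fun y => (A i).mulVec y + b i) '' {y : Fin n → ℝ | ∑ j, y j ^ 2 ≤ 1}) := by
  let e : (Fin n → T) ≃ Fin (Fintype.card T ^ n) := Fintype.equivFinOfCardEq (by simp)
  refine ⟨fun i => diagonal (rad ∘ e.symm i), fun i => ctr ∘ e.symm i,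
    fun i => ?_, fun i => ?_, ?_⟩
  · rw [det_diagonal, isUnit_iff_ne_zero]
    exact prod_ne_zero_iff.mpr fun j _ => (hrad _).ne'
  · intro x hx j
    have hxj : |x j - ctr (e.symm i j)| ≤ rad (e.symm i j) :=
      axisEllipsoid_subset_box (fun j => (hrad (e.symm i j)).le) hx j
    have hxj' : |x j| ≤ 1 := by
      linarith [abs_sub_abs_le_abs_sub (x j) (ctr (e.symm i j)), hinside (e.symm i j)]
    exact abs_le.mp hxj'
  · intro x hx
    choose g hg using fun j => hcover (x j) (abs_le.mpr ⟨by linarith [(hx j).1], (hx j).2⟩)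
    refine Set.mem_iUnion.mpr ⟨e g, box_subset_axisEllipsoid (fun j => hrad _) fun j => ?_⟩
    simpa using hg j

lemma exists_abs_sub_midpoint_le {n : ℕ} {h w : ℝ} (hh : 0 < h) (hw0 : 0 ≤ w)
    (hw : w < n * h) :
    ∃ i < n, |w - (i + 1 / 2) * h| ≤ h / 2 := by
  have hwh : 0 ≤ w / h := div_nonneg hw0 hh.le
  refine ⟨⌊w / h⌋₊, (Nat.floor_lt hwh).mpr ((div_lt_iff₀ hh).mpr hw),
    abs_le.mpr ⟨?_, ?_⟩⟩
  · have := (le_div_iff₀ hh).mp (Nat.floor_le hwh)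
    linarith
  · have := (div_lt_iff₀ hh).mp (Nat.lt_floor_add_one (w / h))
    linarith

noncomputable def dyadicCenter (n k i : ℕ) : ℝ :=
  1 - 1 / 2 ^ k + (i + 1 / 2) * (1 / 2 ^ k / (2 * n))

noncomputable def dyadicRadius (k : ℕ) : ℝ := 1 / 2 ^ k / 4

section Dyadic

variable {n k i : ℕ}

lemma dyadic_midpoint_offset_le (hi : i < n) :
    ((i : ℝ) + 1 / 2) * (1 / 2 ^ k / (2 * n)) ≤ 1 / 2 ^ k / 2 := by
  have hn : (0 : ℝ) < n := by exact_mod_cast (Nat.zero_le i).trans_lt hi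
  have hin : (i : ℝ) + 1 ≤ n := by exact_mod_cast hi
  rw [mul_div_assoc', div_le_div_iff₀ (by positivity) (by positivity)]
  have : (0 : ℝ) < 1 / 2 ^ k := by positivity
  nlinarith

lemma dyadicCenter_pos (hi : i < n) : 0 < dyadicCenter n k i := by
  have hn : (0 : ℝ) < n := by exact_mod_cast (Nat.zero_le i).trans_lt hi
  have hk : 1 / (2 : ℝ) ^ k ≤ 1 :=
    div_le_one_of_le₀ (one_le_pow₀ one_le_two) (by positivity)
  have : 0 < ((i : ℝ) + 1 / 2) * (1 / 2 ^ k / (2 * n)) := by positivity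
  unfold dyadicCenter
  linarith

lemma dyadicCenter_add_dyadicRadius_le (hi : i < n) :
    dyadicCenter n k i + dyadicRadius k ≤ 1 := by
  have := dyadic_midpoint_offset_le (k := k) hi
  have : (0 : ℝ) < 1 / 2 ^ k := by positivity
  unfold dyadicCenter dyadicRadius
  linarith

lemma exists_abs_sub_dyadicCenter_le {ε u : ℝ} (hn : 0 < n) (hε : 0 < ε) (hu0 : 0 ≤ u)
    (hu : u ≤ 1 - ε) :
    ∃ k ≤ ⌊logb 2 (1 / ε)⌋₊, ∃ i < n,
      |u - dyadicCenter n k i| ≤ dyadicRadius k / n := by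
  have hd : 0 < 1 - u := by linarith
  obtain ⟨k, hk, hk'⟩ := exists_nat_pow_near (one_le_one_div hd (by linarith)) one_lt_two
  have hk_le : k ≤ ⌊logb 2 (1 / ε)⌋₊ := by
    refine Nat.le_floor ((le_logb_iff_rpow_le one_lt_two (by positivity)).mpr ?_)
    rw [rpow_natCast]
    exact hk.trans (one_div_le_one_div_of_le hε (by linarith))
  have hshell_lo : 1 - u ≤ 1 / 2 ^ k := (le_one_div (by positivity) hd).mp hk
  have hshell_hi : 1 / 2 ^ k / 2 < 1 - u := by
    have := (one_div_lt hd (by positivity)).mp hk'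
    rwa [pow_succ, ← div_div] at this
  obtain ⟨i, hi, hw⟩ := exists_abs_sub_midpoint_le (n := n) (w := u - (1 - 1 / 2 ^ k))
    (h := 1 / 2 ^ k / (2 * n)) (by positivity) (by linarith)
    (by rw [show (n : ℝ) * (1 / 2 ^ k / (2 * n)) = 1 / 2 ^ k / 2 by field_simp]; linarith)
  refine ⟨k, hk_le, i, hi, ?_⟩
  have hctr : u - dyadicCenter n k i =
      u - (1 - 1 / 2 ^ k) - (i + 1 / 2) * (1 / 2 ^ k / (2 * n)) := by
    unfold dyadicCenter; ring
  have hrad : dyadicRadius k / n = 1 / 2 ^ k / (2 * n) / 2 := by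
    unfold dyadicRadius; field_simp; ring
  rwa [hctr, hrad]

end Dyadic

noncomputable def signedDyadicCenter (n : ℕ) {K : ℕ} (t : Fin K × Bool × Fin n) : ℝ :=
  (if t.2.1 then 1 else -1) * dyadicCenter n t.1 t.2.2

lemma abs_signedDyadicCenter {n K : ℕ} (t : Fin K × Bool × Fin n) :
    |signedDyadicCenter n t| = dyadicCenter n t.1 t.2.2 := by
  have := (dyadicCenter_pos (k := t.1) t.2.2.2).le
  unfold signedDyadicCenter
  split_ifs <;> simp [abs_of_nonneg this]

lemma exists_abs_sub_signedDyadicCenter_le {n : ℕ} {ε u : ℝ} (hn : 0 < n) (hε : 0 < ε)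
    (hu : |u| ≤ 1 - ε) :
    ∃ t : Fin (⌊logb 2 (1 / ε)⌋₊ + 1) × Bool × Fin n,
      |u - signedDyadicCenter n t| ≤ dyadicRadius t.1 / n := by
  obtain ⟨k, hk, i, hi, hnear⟩ := exists_abs_sub_dyadicCenter_le hn hε (abs_nonneg u) hu
  refine ⟨(⟨k, Nat.lt_succ_of_le hk⟩, 0 ≤ u, ⟨i, hi⟩), ?_⟩
  unfold signedDyadicCenter
  rcases le_or_gt 0 u with hu0 | hu0
  · simpa [hu0, abs_of_nonneg hu0] using hnear
  · rw [abs_of_neg hu0, ← abs_neg] at hnear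
    simpa [hu0.not_ge, add_comm] using hnear

lemma two_mul_pow_le_two_rpow {n : ℕ} (hn : 2 ≤ n) :
    (2 * n : ℝ) ^ n ≤ 2 ^ (2 * n * logb 2 n) := by
  have hnR : (2 : ℝ) ≤ n := by exact_mod_cast hn
  have hpow : (2 : ℝ) ^ (2 * n * logb 2 n) = ((n : ℝ) ^ 2) ^ n := by
    rw [mul_comm, rpow_mul zero_le_two, rpow_logb two_pos (by norm_num) (by linarith),
      ← pow_mul, ← rpow_natCast]
    push_cast; ring_nf
  rw [hpow]
  gcongr
  nlinarith

/-- There is a constant `c > 0` such that for all `n ≥ 2` and `ε ∈ (0,1)`, the cube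
`[-1+ε, 1-ε]^n` can be covered by at most `2^{c n log₂ n} · (1 + log₂(1/ε))^n`
ellipsoids (images of the unit Euclidean ball under invertible affine maps), each
contained in `[-1,1]^n`. -/
theorem ellipsoid_covering_upper_bound :
    ∃ c : ℝ, 0 < c ∧ ∀ n : ℕ, 2 ≤ n → ∀ ε : ℝ, ε ∈ Set.Ioo (0 : ℝ) 1 →
      ∃ (m : ℕ) (A : Fin m → Matrix (Fin n) (Fin n) ℝ) (b : Fin m → (Fin n → ℝ)),
        (∀ i, IsUnit (A i).det) ∧
        (∀ i, (fun y => (A i).mulVec y + b i) '' {y : Fin n → ℝ | ∑ j, y j ^ 2 ≤ 1} ⊆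
          {x : Fin n → ℝ | ∀ j, -1 ≤ x j ∧ x j ≤ 1}) ∧
        ({x : Fin n → ℝ | ∀ j, -1 + ε ≤ x j ∧ x j ≤ 1 - ε} ⊆
          ⋃ i, (fun y => (A i).mulVec y + b i) '' {y : Fin n → ℝ | ∑ j, y j ^ 2 ≤ 1}) ∧
        (m : ℝ) ≤ 2 ^ (c * n * Real.logb 2 n) * (1 + Real.logb 2 (1 / ε)) ^ n := by
  refine ⟨2, two_pos, fun n hn ε ⟨hε0, hε1⟩ => ?_⟩
  have hL : 0 ≤ logb 2 (1 / ε) := logb_nonneg one_lt_two (one_le_one_div hε0 hε1.le)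
  obtain ⟨A, b, hdet, hinside, hcover⟩ :=
    exists_ellipsoid_cover_of_interval_cover n
      (T := Fin (⌊logb 2 (1 / ε)⌋₊ + 1) × Bool × Fin n) (signedDyadicCenter n)
      (fun t => dyadicRadius t.1)
      (fun _ => by unfold dyadicRadius; positivity)
      (fun t => by rw [abs_signedDyadicCenter]; exact dyadicCenter_add_dyadicRadius_le t.2.2.2)
      (fun _ hu => exists_abs_sub_signedDyadicCenter_le (by omega) hε0 hu)
  refine ⟨_, A, b, hdet, hinside, hcover, ?_⟩
  calc (↑(Fintype.card (Fin (⌊logb 2 (1 / ε)⌋₊ + 1) × Bool × Fin n) ^ n) : ℝ)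
      = (2 * n : ℝ) ^ n * (1 + (⌊logb 2 (1 / ε)⌋₊ : ℝ)) ^ n := by
        simp only [Fintype.card_prod, Fintype.card_fin, Fintype.card_bool]
        push_cast
        rw [← mul_pow]
        ring
    _ ≤ 2 ^ (2 * n * logb 2 n) * (1 + logb 2 (1 / ε)) ^ n := by
        gcongr
        · exact two_mul_pow_le_two_rpow hn
        · exact Nat.floor_le hL
end

section
/- Fix n ≥ 1 and ε ∈ (0,1). Let K ⊂ ℝ^n be centrally symmetric and let K_1,…,K_m be affine copies of K such that each K_j scaled by 2 about its center is contained in [−1,1]^n and K_1 ∪ ⋯ ∪ K_m ⊇ [−1+ε,1−ε]^n. Then m ≥ (1/2^n)·(1 + ⌊log₂(1/ε)⌋)^n. -/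
/-!
Take the grid of points whose coordinates are `1 - 2^k ε` with `0 ≤ k ≤ ⌊log₂(1/ε)⌋`; it lies
in `[-1+ε, 1-ε]^n` and has `(1 + ⌊log₂(1/ε)⌋)^n` points. A copy `K_j` is symmetric about its
center `c`, and its dilate by `2` about `c` lies in `[-1,1]^n`; together these force
`1 - y_t ≤ 3 (1 - x_t)` for all `x, y ∈ K_j` and every coordinate `t`. Since consecutive grid
levels differ by a factor `2`, each coordinate of the grid points in `K_j` takes at most two
values, so `K_j` contains at most `2^n` grid points.
-/

open Finset

lemma two_smul_sub_mem_image_of_neg_mem {E F : Type*} [AddCommGroup E] [AddCommGroup F]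
    {K : Set E} (hK : ∀ x ∈ K, -x ∈ K) {f : E → F} (hf : ∀ x, f (-x) = -f x) (c : F)
    {y : F} (hy : y ∈ (fun x => f x + c) '' K) : 2 • c - y ∈ (fun x => f x + c) '' K := by
  obtain ⟨x, hx, rfl⟩ := hy
  refine ⟨-x, hK x hx, ?_⟩
  simp only [hf, two_nsmul]
  abel

lemma le_add_one_of_two_pow_le_three_mul_two_pow {a c : ℕ} (h : 2 ^ c ≤ 3 * 2 ^ a) :
    c ≤ a + 1 := by
  by_contra! hc
  have : 2 ^ (a + 2) ≤ 2 ^ c := Nat.pow_le_pow_right two_pos hc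
  rw [pow_add] at this
  have : 0 < 2 ^ a := by positivity
  linarith

lemma Finset.card_le_two_of_forall_le_add_one {s : Finset ℕ}
    (h : ∀ a ∈ s, ∀ c ∈ s, c ≤ a + 1) : #s ≤ 2 := by
  rcases s.eq_empty_or_nonempty with rfl | hs
  · simp
  · calc #s ≤ #(Icc (s.min' hs) (s.min' hs + 1)) :=
          card_le_card fun c hc => mem_Icc.2 ⟨s.min'_le c hc, h _ (s.min'_mem hs) c hc⟩
      _ = 2 := by simp only [Nat.card_Icc]; omega

open Classical in
lemma Finset.card_le_card_mul_of_forall_exists_mem {α β : Type*} [Fintype β]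
    {G : Finset α} {S : β → Set α} (hG : ∀ x ∈ G, ∃ i, x ∈ S i) {B : ℕ}
    (hS : ∀ i, #{x ∈ G | x ∈ S i} ≤ B) :
    #G ≤ Fintype.card β * B := by
  calc #G ≤ #(univ.biUnion fun i => {x ∈ G | x ∈ S i}) := card_le_card fun x hx => by
        obtain ⟨i, hi⟩ := hG x hx
        exact mem_biUnion.2 ⟨i, mem_univ i, mem_filter.2 ⟨hx, hi⟩⟩
    _ ≤ Fintype.card β * B := card_biUnion_le_card_mul _ _ _ fun i _ => hS i

lemma two_pow_floor_logb_le {y : ℝ} (hy : 1 ≤ y) : (2 : ℝ) ^ ⌊Real.logb 2 y⌋₊ ≤ y := by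
  rw [← Real.rpow_natCast, ← Real.le_logb_iff_rpow_le one_lt_two (by linarith)]
  exact Nat.floor_le (Real.logb_nonneg one_lt_two hy)

def dyadicPoint {ι : Type*} (ε : ℝ) (k : ι → ℕ) : ι → ℝ := fun j => 1 - 2 ^ k j * ε

lemma dyadicPoint_mem_cube {ι : Type*} {ε : ℝ} (hε : ε ∈ Set.Ioo (0 : ℝ) 1) {k : ι → ℕ}
    (hk : ∀ j, k j ≤ ⌊Real.logb 2 (1 / ε)⌋₊) (j : ι) :
    -1 + ε ≤ dyadicPoint ε k j ∧ dyadicPoint ε k j ≤ 1 - ε := by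
  obtain ⟨hε0, hε1⟩ := hε
  have hle : (2 : ℝ) ^ k j * ε ≤ 1 := by
    rw [← le_div_iff₀ hε0]
    exact (pow_le_pow_right₀ one_le_two (hk j)).trans
      (two_pow_floor_logb_le ((le_div_iff₀ hε0).2 (by linarith)))
  have hge : ε ≤ 2 ^ k j * ε := le_mul_of_one_le_left hε0.le (one_le_pow₀ one_le_two)
  constructor <;> simp only [dyadicPoint] <;> linarith

section SymmetricPiece

variable {ι : Type*} {S : Set (ι → ℝ)} {c : ι → ℝ}

lemma one_sub_apply_le_three_mul_one_sub_apply
    (hsymm : ∀ x ∈ S, 2 • c - x ∈ S) (hdil : ∀ x ∈ S, ∀ j, c j + 2 * (x j - c j) ≤ 1)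
    {x y : ι → ℝ} (hx : x ∈ S) (hy : y ∈ S) (j : ι) : 1 - y j ≤ 3 * (1 - x j) := by
  have hx' := hdil x hx j
  have hy' := hdil _ (hsymm y hy) j
  simp only [Pi.sub_apply, Pi.add_apply, two_nsmul] at hy'
  linarith

lemma le_add_one_of_dyadicPoint_mem
    (hsymm : ∀ x ∈ S, 2 • c - x ∈ S) (hdil : ∀ x ∈ S, ∀ j, c j + 2 * (x j - c j) ≤ 1)
    {ε : ℝ} (hε : 0 < ε) {k l : ι → ℕ} (hk : dyadicPoint ε k ∈ S) (hl : dyadicPoint ε l ∈ S)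
    (j : ι) : l j ≤ k j + 1 := by
  have h := one_sub_apply_le_three_mul_one_sub_apply hsymm hdil hk hl j
  simp only [dyadicPoint, sub_sub_cancel] at h
  rw [← mul_assoc] at h
  exact le_add_one_of_two_pow_le_three_mul_two_pow <| by
    exact_mod_cast le_of_mul_le_mul_right h hε

open Classical in
lemma card_filter_dyadicPoint_mem_le [Fintype ι]
    (hsymm : ∀ x ∈ S, 2 • c - x ∈ S) (hdil : ∀ x ∈ S, ∀ j, c j + 2 * (x j - c j) ≤ 1)
    {ε : ℝ} (hε : 0 < ε) (G : Finset (ι → ℕ)) :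
    #{k ∈ G | dyadicPoint ε k ∈ S} ≤ 2 ^ Fintype.card ι := by
  set F := {k ∈ G | dyadicPoint ε k ∈ S}
  have hmem : ∀ k ∈ F, dyadicPoint ε k ∈ S := fun k hk => (mem_filter.1 hk).2
  have hcoord : ∀ j, #(F.image (· j)) ≤ 2 := fun j => by
    refine card_le_two_of_forall_le_add_one ?_
    simp only [mem_image]
    rintro _ ⟨k, hk, rfl⟩ _ ⟨l, hl, rfl⟩
    exact le_add_one_of_dyadicPoint_mem hsymm hdil hε (hmem k hk) (hmem l hl) j
  calc #F ≤ #(Fintype.piFinset fun j => F.image (· j)) :=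
        card_le_card fun k hk => Fintype.mem_piFinset.2 fun j => mem_image_of_mem _ hk
    _ = ∏ j, #(F.image (· j)) := Fintype.card_piFinset _
    _ ≤ ∏ _j : ι, 2 := prod_le_prod' fun j _ => hcoord j
    _ = 2 ^ Fintype.card ι := by simp

end SymmetricPiece

theorem symmetric_body_covering_lower_bound_general (n : ℕ)
    (ε : ℝ) (hε : ε ∈ Set.Ioo (0 : ℝ) 1)
    (K : Set (Fin n → ℝ)) (hKsym : ∀ x ∈ K, -x ∈ K)
    (m : ℕ) (A : Fin m → Matrix (Fin n) (Fin n) ℝ)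
    (b : Fin m → (Fin n → ℝ))
    (Kc : Fin m → Set (Fin n → ℝ))
    (hKc : ∀ i, Kc i = (fun x => (A i).mulVec x + b i) '' K)
    (hscal : ∀ i, (fun x : Fin n → ℝ => fun j => b i j + 2 * (x j - b i j)) '' Kc i ⊆
      {x : Fin n → ℝ | ∀ j, -1 ≤ x j ∧ x j ≤ 1})
    (hcover : {x : Fin n → ℝ | ∀ j, -1 + ε ≤ x j ∧ x j ≤ 1 - ε} ⊆ ⋃ i, Kc i) :
    (1 / 2 ^ n : ℝ) * (1 + (⌊Real.logb 2 (1 / ε)⌋₊ : ℝ)) ^ n ≤ m := by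
  set N := ⌊Real.logb 2 (1 / ε)⌋₊
  have hsymm : ∀ i, ∀ x ∈ Kc i, 2 • b i - x ∈ Kc i := fun i x hx => by
    rw [hKc i] at hx ⊢
    exact two_smul_sub_mem_image_of_neg_mem hKsym (A i).mulVec_neg (b i) hx
  have hdil : ∀ i, ∀ x ∈ Kc i, ∀ j, b i j + 2 * (x j - b i j) ≤ 1 :=
    fun i x hx j => (hscal i ⟨x, hx, rfl⟩ j).2
  have hgrid : ∀ k ∈ Fintype.piFinset fun _ : Fin n => range (N + 1),
      ∃ i, dyadicPoint ε k ∈ Kc i := fun k hk =>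
    Set.mem_iUnion.1 <| hcover <| dyadicPoint_mem_cube hε fun j =>
      Nat.lt_succ_iff.1 (mem_range.1 (Fintype.mem_piFinset.1 hk j))
  have hcount := card_le_card_mul_of_forall_exists_mem
    (S := fun i => {k | dyadicPoint ε k ∈ Kc i}) hgrid fun i =>
    card_filter_dyadicPoint_mem_le (hsymm i) (hdil i) hε.1 _
  simp only [Fintype.card_piFinset, card_range, prod_const, card_univ, Fintype.card_fin]
    at hcount
  rw [one_div, inv_mul_le_iff₀ (by positivity), add_comm, mul_comm]
  exact_mod_cast hcount

/-- Lower bound for coverings by affine copies of a centrally symmetric body: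
if affine copies `K_j` of a centrally symmetric body `K` cover `[-1+ε,1-ε]^n` and each
`K_j` scaled by `2` about its center lies in `[-1,1]^n`, then
`m ≥ (1/2^n)·(1 + ⌊log₂(1/ε)⌋)^n`. -/
theorem symmetric_body_covering_lower_bound (n : ℕ) (hn : 1 ≤ n)
    (ε : ℝ) (hε : ε ∈ Set.Ioo (0 : ℝ) 1)
    (K : Set (Fin n → ℝ)) (hKsym : ∀ x ∈ K, -x ∈ K)
    (m : ℕ) (A : Fin m → Matrix (Fin n) (Fin n) ℝ) (hA : ∀ i, IsUnit (A i).det)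
    (b : Fin m → (Fin n → ℝ))
    (Kc : Fin m → Set (Fin n → ℝ))
    (hKc : ∀ i, Kc i = (fun x => (A i).mulVec x + b i) '' K)
    (hscal : ∀ i, (fun x : Fin n → ℝ => fun j => b i j + 2 * (x j - b i j)) '' Kc i ⊆
      {x : Fin n → ℝ | ∀ j, -1 ≤ x j ∧ x j ≤ 1})
    (hcover : {x : Fin n → ℝ | ∀ j, -1 + ε ≤ x j ∧ x j ≤ 1 - ε} ⊆ ⋃ i, Kc i) :
    (1 / 2 ^ n : ℝ) * (1 + (⌊Real.logb 2 (1 / ε)⌋₊ : ℝ)) ^ n ≤ m :=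
  symmetric_body_covering_lower_bound_general n ε hε K hKsym m A b Kc hKc hscal hcover
end
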